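/- For every candidate p₁×p₂ matrix Σ₀ and all i < j ≤ n: E(Δ̂_{ij,0}) = ‖Σ*‖_F² − 2 tr(Σ*ᵀ Σ₀) = Δ₀ − ‖Σ₀‖_F², where Δ₀ = ‖Σ* − Σ₀‖_F²; consequently the covariance-structure test statistic is exactly unbiased: E(T̂_{n,0}) = Δ₀. -/

import Mathlib

open MeasureTheory ProbabilityTheory Filter Matrix Finset

noncomputable section

/-- The ECDM data model: `x_j = Γ w_j + μ`, `j = 1,…,n`, where the `w_j` are i.i.d. with
mean `0`, covariance `I_q` and finite fourth moments.  The `p = p₁ + p₂` coordinates are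
partitioned into the first `p₁` rows (`Γ₁`, `μ₁`) and the last `p₂` rows (`Γ₂`, `μ₂`). -/
structure ECDMModel (Ω : Type) [MeasurableSpace Ω] where
  P : Measure Ω
  isProb : IsProbabilityMeasure P
  p₁ : ℕ
  p₂ : ℕ
  q : ℕ
  n : ℕ
  hp₁ : 1 ≤ p₁
  hp₂ : 1 ≤ p₂
  hn : 4 ≤ n
  Γ₁ : Matrix (Fin p₁) (Fin q) ℝ
  Γ₂ : Matrix (Fin p₂) (Fin q) ℝ
  μ₁ : Fin p₁ → ℝ
  μ₂ : Fin p₂ → ℝ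
  w : ℕ → Ω → Fin q → ℝ
  w_meas : ∀ j, Measurable (w j)
  w_indep : iIndepFun (m := fun _ : ℕ => MeasurableSpace.pi) w P
  w_ident : ∀ j j', IdentDistrib (w j) (w j') P P
  w_mean : ∀ j r, ∫ ω, w j ω r ∂P = 0
  w_cov : ∀ j r s, ∫ ω, w j ω r * w j ω s ∂P = if r = s then 1 else 0
  w_mom4 : ∀ j r, Integrable (fun ω => (w j ω r) ^ 4) P

namespace ECDMModel

variable {Ω : Type} [MeasurableSpace Ω]

/-- The first block `x_{1j} = Γ₁ w_j + μ₁` of the `j`-th observation. -/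
def x1 (M : ECDMModel Ω) (j : ℕ) (ω : Ω) : Fin M.p₁ → ℝ :=
  fun a => M.Γ₁.mulVec (M.w j ω) a + M.μ₁ a

/-- The second block `x_{2j} = Γ₂ w_j + μ₂` of the `j`-th observation. -/
def x2 (M : ECDMModel Ω) (j : ℕ) (ω : Ω) : Fin M.p₂ → ℝ :=
  fun a => M.Γ₂.mulVec (M.w j ω) a + M.μ₂ a

/-- `n₍₁₎ = ⌈n/2⌉`. -/
def n1 (M : ECDMModel Ω) : ℕ := (M.n + 1) / 2

/-- `n₍₂₎ = n − n₍₁₎`. -/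
def n2 (M : ECDMModel Ω) : ℕ := M.n - M.n1

/-- `n₍ᵢ₎` for `i = 1, 2`. -/
def nsub (M : ECDMModel Ω) (i : ℕ) : ℕ := if i = 1 then M.n1 else M.n2

/-- The ECDM index set `V_{n(1)(k)}`. -/
def V1 (M : ECDMModel Ω) (k : ℕ) : Finset ℕ :=
  if M.n1 ≤ k / 2 then Finset.Icc (k / 2 - M.n1 + 1) (k / 2)
  else Finset.Icc 1 (k / 2) ∪ Finset.Icc (k / 2 + M.n2 + 1) M.n

/-- The ECDM index set `V_{n(2)(k)}`. -/
def V2 (M : ECDMModel Ω) (k : ℕ) : Finset ℕ :=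
  if k / 2 ≤ M.n1 then Finset.Icc (k / 2 + 1) (k / 2 + M.n2)
  else Finset.Icc 1 (k / 2 - M.n1) ∪ Finset.Icc (k / 2 + 1) M.n

/-- The ECDM index set `V_{n(i)(k)}` for `i = 1, 2`. -/
def Vset (M : ECDMModel Ω) (i k : ℕ) : Finset ℕ := if i = 1 then M.V1 k else M.V2 k

/-- `x̄_{1(i)(k)} = n₍ᵢ₎⁻¹ Σ_{j ∈ V_{n(i)(k)}} x_{1j}`. -/
def xbar1 (M : ECDMModel Ω) (i k : ℕ) (ω : Ω) : Fin M.p₁ → ℝ :=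
  fun a => (∑ j ∈ M.Vset i k, M.x1 j ω a) / (M.nsub i : ℝ)

/-- `x̄_{2(i)(k)} = n₍ᵢ₎⁻¹ Σ_{j ∈ V_{n(i)(k)}} x_{2j}`. -/
def xbar2 (M : ECDMModel Ω) (i k : ℕ) (ω : Ω) : Fin M.p₂ → ℝ :=
  fun a => (∑ j ∈ M.Vset i k, M.x2 j ω a) / (M.nsub i : ℝ)

/-- `Δ̂_{ij} = (x_{1i}−x̄_{1(1)(i+j)})ᵀ(x_{1j}−x̄_{1(2)(i+j)}) ·
(x_{2i}−x̄_{2(1)(i+j)})ᵀ(x_{2j}−x̄_{2(2)(i+j)})`. -/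
def Dhat (M : ECDMModel Ω) (i j : ℕ) (ω : Ω) : ℝ :=
  (∑ a, (M.x1 i ω a - M.xbar1 1 (i + j) ω a) * (M.x1 j ω a - M.xbar1 2 (i + j) ω a)) *
  (∑ a, (M.x2 i ω a - M.xbar2 1 (i + j) ω a) * (M.x2 j ω a - M.xbar2 2 (i + j) ω a))

/-- `u_n = n₍₁₎n₍₂₎/((n₍₁₎−1)(n₍₂₎−1))`. -/
def u (M : ECDMModel Ω) : ℝ :=
  ((M.n1 : ℝ) * (M.n2 : ℝ)) / (((M.n1 : ℝ) - 1) * ((M.n2 : ℝ) - 1))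

/-- The ECDM estimator `T̂_n = (2u_n/(n(n−1))) Σ_{i<j} Δ̂_{ij}`. -/
def That (M : ECDMModel Ω) (ω : Ω) : ℝ :=
  2 * M.u / ((M.n : ℝ) * ((M.n : ℝ) - 1)) *
    ∑ j ∈ Finset.Icc 1 M.n, ∑ i ∈ Finset.Ico 1 j, M.Dhat i j ω

/-- `W_{1n}`, the ECDM estimator of `tr(Σ₁²)`. -/
def W1 (M : ECDMModel Ω) (ω : Ω) : ℝ :=
  2 * M.u / ((M.n : ℝ) * ((M.n : ℝ) - 1)) *
    ∑ s ∈ Finset.Icc 1 M.n, ∑ r ∈ Finset.Ico 1 s,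
      (∑ a, (M.x1 r ω a - M.xbar1 1 (r + s) ω a) * (M.x1 s ω a - M.xbar1 2 (r + s) ω a)) ^ 2

/-- `W_{2n}`, the ECDM estimator of `tr(Σ₂²)`. -/
def W2 (M : ECDMModel Ω) (ω : Ω) : ℝ :=
  2 * M.u / ((M.n : ℝ) * ((M.n : ℝ) - 1)) *
    ∑ s ∈ Finset.Icc 1 M.n, ∑ r ∈ Finset.Ico 1 s,
      (∑ a, (M.x2 r ω a - M.xbar2 1 (r + s) ω a) * (M.x2 s ω a - M.xbar2 2 (r + s) ω a)) ^ 2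

/-- `Σ₁ = Γ₁ Γ₁ᵀ`. -/
def Sig1 (M : ECDMModel Ω) : Matrix (Fin M.p₁) (Fin M.p₁) ℝ := M.Γ₁ * M.Γ₁ᵀ

/-- `Σ₂ = Γ₂ Γ₂ᵀ`. -/
def Sig2 (M : ECDMModel Ω) : Matrix (Fin M.p₂) (Fin M.p₂) ℝ := M.Γ₂ * M.Γ₂ᵀ

/-- `Σ* = Γ₁ Γ₂ᵀ`. -/
def Sigs (M : ECDMModel Ω) : Matrix (Fin M.p₁) (Fin M.p₂) ℝ := M.Γ₁ * M.Γ₂ᵀ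

/-- `Δ = tr(Σ* Σ*ᵀ)`. -/
def Delta (M : ECDMModel Ω) : ℝ := Matrix.trace (M.Sigs * M.Sigsᵀ)

/-- `Ψ = tr(Σ₁²) tr(Σ₂²)`. -/
def Psi (M : ECDMModel Ω) : ℝ := Matrix.trace (M.Sig1 ^ 2) * Matrix.trace (M.Sig2 ^ 2)

/-- `Υ = tr(Σ₁ Σ* Σ₂ Σ*ᵀ)`. -/
def Upsilon (M : ECDMModel Ω) : ℝ := Matrix.trace (M.Sig1 * M.Sigs * M.Sig2 * M.Sigsᵀ)

/-- `Ω = tr(Σ₁⁴) tr(Σ₂⁴)`. -/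
def Omeg (M : ECDMModel Ω) : ℝ := Matrix.trace (M.Sig1 ^ 4) * Matrix.trace (M.Sig2 ^ 4)

/-- `M_r = Var(w_{rj}²)`. -/
def Mom (M : ECDMModel Ω) (r : Fin M.q) : ℝ := variance (fun ω => (M.w 1 ω r) ^ 2) M.P

/-- `δ = √(2 tr(Σ₁²) tr(Σ₂²))/n`. -/
def delta (M : ECDMModel Ω) : ℝ := Real.sqrt (2 * M.Psi) / (M.n : ℝ)

/-- `δ̂ = √(2 W_{1n} W_{2n})/n`. -/
def deltahat (M : ECDMModel Ω) (ω : Ω) : ℝ := Real.sqrt (2 * M.W1 ω * M.W2 ω) / (M.n : ℝ)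

/-- The leading variance term
`K² = (4/n)[Υ + tr((Σ*Σ*ᵀ)²) + Σ_j (M_j−2)(γ_{1j}ᵀ Σ* γ_{2j})²] + (2/n²)[Ψ + Δ²]`. -/
def K2 (M : ECDMModel Ω) : ℝ :=
  4 / (M.n : ℝ) *
    (M.Upsilon + Matrix.trace ((M.Sigs * M.Sigsᵀ) ^ 2) +
      ∑ j, (M.Mom j - 2) * (∑ a, ∑ b, M.Γ₁ a j * M.Sigs a b * M.Γ₂ b j) ^ 2) +
  2 / (M.n : ℝ) ^ 2 * (M.Psi + M.Delta ^ 2)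

/-- Assumption (A-i). -/
def Ai (M : ECDMModel Ω) : Prop :=
  (∀ j, ∀ r s : Fin M.q, r ≠ s →
    ∫ ω, (M.w j ω r) ^ 2 * (M.w j ω s) ^ 2 ∂M.P = 1) ∧
  (∀ j, ∀ r s t v : Fin M.q, r ≠ s → r ≠ t → r ≠ v →
    ∫ ω, M.w j ω r * M.w j ω s * M.w j ω t * M.w j ω v ∂M.P = 0)

/-- Assumption (A-ii). -/
def Aii (M : ECDMModel Ω) : Prop :=
  ∀ j (v : ℕ), v ≤ 8 → ∀ r : Fin v → Fin M.q, Function.Injective r →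
    ∀ α : Fin v → ℕ, (∀ i, 1 ≤ α i ∧ α i ≤ 4) → (∑ i, α i) ≤ 8 →
      ∫ ω, ∏ i, (M.w j ω (r i)) ^ (α i) ∂M.P = ∏ i, ∫ ω, (M.w j ω (r i)) ^ (α i) ∂M.P

end ECDMModel

/-- Assumption (A-iii) along a sequence of models. -/
def Aiii {Ω : ℕ → Type} [∀ k, MeasurableSpace (Ω k)] (M : ∀ k, ECDMModel (Ω k)) : Prop :=
  Tendsto (fun k =>
      min (Matrix.trace ((M k).Sig1 ^ 4) / Matrix.trace ((M k).Sig1 ^ 2) ^ 2)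
          (Matrix.trace ((M k).Sig2 ^ 4) / Matrix.trace ((M k).Sig2 ^ 2) ^ 2))
    atTop (nhds 0)

/-- Assumption (A-iv) along a sequence of models (in particular `Δ > 0`). -/
def Aiv {Ω : ℕ → Type} [∀ k, MeasurableSpace (Ω k)] (M : ∀ k, ECDMModel (Ω k)) : Prop :=
  (∀ k, 0 < (M k).Delta) ∧
    Tendsto (fun k => (M k).Psi / (((M k).n : ℝ) ^ 2 * (M k).Delta ^ 2)) atTop (nhds 0)

/-- Assumption (A-v) along a sequence of models. -/
def Av {Ω : ℕ → Type} [∀ k, MeasurableSpace (Ω k)] (M : ∀ k, ECDMModel (Ω k)) : Prop :=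
  ∃ C : ℝ, ∀ k, ((M k).n : ℝ) ^ 2 * (M k).Delta ^ 2 / (M k).Psi ≤ C

/-- The asymptotic framework: `m = min(p, n) → ∞` and `limsup_k sup_r M_r < ∞`
(stated as boundedness), together with positivity of `tr(Σᵢ²)`. -/
def Framework {Ω : ℕ → Type} [∀ k, MeasurableSpace (Ω k)] (M : ∀ k, ECDMModel (Ω k)) : Prop :=
  Tendsto (fun k => min ((M k).p₁ + (M k).p₂) ((M k).n)) atTop atTop ∧
  (∃ C : ℝ, ∀ k r, (M k).Mom r ≤ C) ∧
  (∀ k, 0 < Matrix.trace ((M k).Sig1 ^ 2) ∧ 0 < Matrix.trace ((M k).Sig2 ^ 2))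

namespace ECDMModel

variable {Ω : Type} [MeasurableSpace Ω]

/-- `Δ̂_{ij,0}` for a candidate matrix `Σ₀`. -/
def Dhat0 (M : ECDMModel Ω) (S0 : Matrix (Fin M.p₁) (Fin M.p₂) ℝ) (i j : ℕ) (ω : Ω) : ℝ :=
  M.u * M.Dhat i j ω -
    (M.n1 : ℝ) / ((M.n1 : ℝ) - 1) *
      ∑ a, ∑ b, (M.x1 i ω a - M.xbar1 1 (i + j) ω a) * S0 a b *
        (M.x2 i ω b - M.xbar2 1 (i + j) ω b) -
    (M.n2 : ℝ) / ((M.n2 : ℝ) - 1) *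
      ∑ a, ∑ b, (M.x1 j ω a - M.xbar1 2 (i + j) ω a) * S0 a b *
        (M.x2 j ω b - M.xbar2 2 (i + j) ω b)

/-- The covariance-structure test statistic
`T̂_{n,0} = (2/(n(n−1))) Σ_{i<j} Δ̂_{ij,0} + ‖Σ₀‖_F²`. -/
def That0 (M : ECDMModel Ω) (S0 : Matrix (Fin M.p₁) (Fin M.p₂) ℝ) (ω : Ω) : ℝ :=
  2 / ((M.n : ℝ) * ((M.n : ℝ) - 1)) *
      ∑ j ∈ Finset.Icc 1 M.n, ∑ i ∈ Finset.Ico 1 j, M.Dhat0 S0 i j ω +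
    Matrix.trace (S0 * S0ᵀ)

/-- `Δ₀ = ‖Σ* − Σ₀‖_F²`. -/
def Delta0 (M : ECDMModel Ω) (S0 : Matrix (Fin M.p₁) (Fin M.p₂) ℝ) : ℝ :=
  Matrix.trace ((M.Sigs - S0) * (M.Sigs - S0)ᵀ)

/-- `ω_{ij} = Σ_{r≠s} Σ_{t≠u} (γ_{1r}ᵀγ_{1t})(γ_{2s}ᵀγ_{2u}) w_{ri} w_{si} w_{tj} w_{uj}`. -/
def omegaT (M : ECDMModel Ω) (i j : ℕ) (ω : Ω) : ℝ :=
  ∑ r, ∑ s, ∑ t, ∑ v,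
    if r ≠ s ∧ t ≠ v then
      (∑ a, M.Γ₁ a r * M.Γ₁ a t) * (∑ b, M.Γ₂ b s * M.Γ₂ b v) *
        (M.w i ω r * M.w i ω s * M.w j ω t * M.w j ω v)
    else 0

/-- `V_n = (2/(n(n−1))) Σ_{i<j} ω_{ij}`. -/
def Vn (M : ECDMModel Ω) (ω : Ω) : ℝ :=
  2 / ((M.n : ℝ) * ((M.n : ℝ) - 1)) *
    ∑ j ∈ Finset.Icc 1 M.n, ∑ i ∈ Finset.Ico 1 j, M.omegaT i j ω

end ECDMModel

/-! After centering, `x_{1i} − x̄_{1(1)(i+j)} = Γ₁ y` and `x_{1j} − x̄_{1(2)(i+j)} = Γ₁ z` (and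
likewise for the second block), where `y = w_i − w̄` is centered over `V_{n(1)(i+j)}` and
`z = w_j − w̄` over `V_{n(2)(i+j)}`. These index sets are disjoint, so `y` and `z` are independent,
with covariances `(1 − 1/n₍₁₎) I_q` and `(1 − 1/n₍₂₎) I_q`. Hence
`E[(Γ₁y)_a (Γ₂y)_b] = (1 − 1/n₍₁₎) Σ*_{ab}`, so that `E Δ̂_{ij} = (1 − 1/n₍₁₎)(1 − 1/n₍₂₎) ‖Σ*‖_F²` by
independence, while the two correction terms have means `(1 − 1/n₍ₛ₎) tr(Σ*ᵀΣ₀)`. The factors `u_n`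
and `n₍ₛ₎/(n₍ₛ₎ − 1)` undo these shrinkages exactly, and
`‖Σ*‖_F² − 2 tr(Σ*ᵀΣ₀) + ‖Σ₀‖_F² = ‖Σ* − Σ₀‖_F²`. -/

open scoped ENNReal

section RandomVector

variable {Ω : Type*} [MeasurableSpace Ω] {μ : Measure Ω} {κ ι ι' : Type*} [Fintype κ]

lemma memLp_two_mul_of_memLp_four {f g : Ω → ℝ} (hf : MemLp f 4 μ) (hg : MemLp g 4 μ) :
    MemLp (fun ω => f ω * g ω) 2 μ :=
  haveI : ENNReal.HolderTriple 4 4 2 := ⟨by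
    rw [show (4 : ℝ≥0∞) = 2 * 2 by norm_num, ENNReal.mul_inv (by simp) (by simp), ← two_mul,
      ← mul_assoc, ENNReal.mul_inv_cancel (by simp) (by simp), one_mul]⟩
  hg.mul' hf

variable {Y Z : Ω → κ → ℝ}

lemma memLp_mulVec_apply {p : ℝ≥0∞} (hY : ∀ r, MemLp (fun ω => Y ω r) p μ)
    (A : Matrix ι κ ℝ) (a : ι) : MemLp (fun ω => (A *ᵥ Y ω) a) p μ :=
  memLp_finsetSum _ fun r _ => (hY r).const_mul (A a r)

lemma memLp_mulVec_mul_mulVec (hY : ∀ r, MemLp (fun ω => Y ω r) 4 μ)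
    (A : Matrix ι κ ℝ) (B : Matrix ι' κ ℝ) (a : ι) (b : ι') :
    MemLp (fun ω => (A *ᵥ Y ω) a * (B *ᵥ Y ω) b) 2 μ :=
  memLp_two_mul_of_memLp_four (memLp_mulVec_apply hY A a) (memLp_mulVec_apply hY B b)

lemma integral_mulVec_mul_mulVec [DecidableEq κ] [IsFiniteMeasure μ]
    (hY : ∀ r, MemLp (fun ω => Y ω r) 4 μ)
    {c : ℝ} (hcov : ∀ r s, ∫ ω, Y ω r * Y ω s ∂μ = if r = s then c else 0)
    (A : Matrix ι κ ℝ) (B : Matrix ι' κ ℝ) (a : ι) (b : ι') :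
    ∫ ω, (A *ᵥ Y ω) a * (B *ᵥ Y ω) b ∂μ = c * (A * Bᵀ) a b := by
  have hint : ∀ r s, Integrable (fun ω => A a r * B b s * (Y ω r * Y ω s)) μ := fun r s =>
    ((memLp_two_mul_of_memLp_four (hY r) (hY s)).integrable one_le_two).const_mul _
  have hexpand : ∀ ω, (A *ᵥ Y ω) a * (B *ᵥ Y ω) b
      = ∑ r, ∑ s, A a r * B b s * (Y ω r * Y ω s) := fun ω => by
    simp only [mulVec, dotProduct, sum_mul_sum]
    exact sum_congr rfl fun r _ => sum_congr rfl fun s _ => by ring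
  simp_rw [hexpand]
  rw [integral_finsetSum _ fun r _ => integrable_finsetSum _ fun s _ => hint r s]
  simp_rw [integral_finsetSum _ fun s _ => hint _ s, integral_const_mul, hcov, mul_ite, mul_zero,
    sum_ite_eq, mem_univ, if_true, mul_apply, transpose_apply, mul_sum]
  exact sum_congr rfl fun r _ => by ring

lemma integrable_sum_mulVec_mul_mulVec [Fintype ι] [Fintype ι'] [IsFiniteMeasure μ]
    (hY : ∀ r, MemLp (fun ω => Y ω r) 4 μ) (A : Matrix ι κ ℝ) (S : Matrix ι ι' ℝ)
    (B : Matrix ι' κ ℝ) :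
    Integrable (fun ω => ∑ a, ∑ b, (A *ᵥ Y ω) a * S a b * (B *ᵥ Y ω) b) μ :=
  integrable_finsetSum _ fun a _ => integrable_finsetSum _ fun b _ => by
    simpa only [mul_comm _ (S a b), mul_assoc] using
      ((memLp_mulVec_mul_mulVec hY A B a b).integrable one_le_two).const_mul (S a b)

lemma integral_sum_mulVec_mul_mulVec [DecidableEq κ] [Fintype ι] [Fintype ι'] [IsFiniteMeasure μ]
    (hY : ∀ r, MemLp (fun ω => Y ω r) 4 μ)
    {c : ℝ} (hcov : ∀ r s, ∫ ω, Y ω r * Y ω s ∂μ = if r = s then c else 0)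
    (A : Matrix ι κ ℝ) (S : Matrix ι ι' ℝ) (B : Matrix ι' κ ℝ) :
    ∫ ω, ∑ a, ∑ b, (A *ᵥ Y ω) a * S a b * (B *ᵥ Y ω) b ∂μ = c * trace ((A * Bᵀ)ᵀ * S) := by
  have hint : ∀ a b, Integrable (fun ω => S a b * ((A *ᵥ Y ω) a * (B *ᵥ Y ω) b)) μ := fun a b =>
    ((memLp_mulVec_mul_mulVec hY A B a b).integrable one_le_two).const_mul (S a b)
  simp_rw [mul_comm _ (S _ _), mul_assoc]
  rw [integral_finsetSum _ fun a _ => integrable_finsetSum _ fun b _ => hint a b]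
  simp_rw [integral_finsetSum _ fun b _ => hint _ b, integral_const_mul,
    integral_mulVec_mul_mulVec hY hcov]
  rw [trace_mul_comm, ← sum_hadamard_eq, mul_sum]
  simp only [hadamard_apply, mul_sum]
  exact sum_congr rfl fun a _ => sum_congr rfl fun b _ => by ring

lemma memLp_mulVec_dotProduct_mulVec [Fintype ι] (hY : ∀ r, MemLp (fun ω => Y ω r) 4 μ)
    (hZ : ∀ r, MemLp (fun ω => Z ω r) 4 μ) (A : Matrix ι κ ℝ) :
    MemLp (fun ω => A *ᵥ Y ω ⬝ᵥ A *ᵥ Z ω) 2 μ :=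
  memLp_finsetSum _ fun a _ =>
    memLp_two_mul_of_memLp_four (memLp_mulVec_apply hY A a) (memLp_mulVec_apply hZ A a)

lemma integrable_dotProduct_mul_dotProduct [Fintype ι] [Fintype ι']
    (hY : ∀ r, MemLp (fun ω => Y ω r) 4 μ) (hZ : ∀ r, MemLp (fun ω => Z ω r) 4 μ)
    (A : Matrix ι κ ℝ) (B : Matrix ι' κ ℝ) :
    Integrable (fun ω => (A *ᵥ Y ω ⬝ᵥ A *ᵥ Z ω) * (B *ᵥ Y ω ⬝ᵥ B *ᵥ Z ω)) μ :=
  (memLp_mulVec_dotProduct_mulVec hY hZ A).integrable_mul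
    (memLp_mulVec_dotProduct_mulVec hY hZ B)

lemma integral_dotProduct_mul_dotProduct [DecidableEq κ] [Fintype ι] [Fintype ι']
    [IsFiniteMeasure μ] (hYZ : IndepFun Y Z μ)
    (hY : ∀ r, MemLp (fun ω => Y ω r) 4 μ) (hZ : ∀ r, MemLp (fun ω => Z ω r) 4 μ) {c d : ℝ}
    (hYcov : ∀ r s, ∫ ω, Y ω r * Y ω s ∂μ = if r = s then c else 0)
    (hZcov : ∀ r s, ∫ ω, Z ω r * Z ω s ∂μ = if r = s then d else 0)
    (A : Matrix ι κ ℝ) (B : Matrix ι' κ ℝ) :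
    ∫ ω, (A *ᵥ Y ω ⬝ᵥ A *ᵥ Z ω) * (B *ᵥ Y ω ⬝ᵥ B *ᵥ Z ω) ∂μ
      = c * d * trace ((A * Bᵀ) * (A * Bᵀ)ᵀ) := by
  set F : ι → ι' → Ω → ℝ := fun a b ω => (A *ᵥ Y ω) a * (B *ᵥ Y ω) b
  set G : ι → ι' → Ω → ℝ := fun a b ω => (A *ᵥ Z ω) a * (B *ᵥ Z ω) b
  have hexpand : ∀ ω, (A *ᵥ Y ω ⬝ᵥ A *ᵥ Z ω) * (B *ᵥ Y ω ⬝ᵥ B *ᵥ Z ω)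
      = ∑ a, ∑ b, F a b ω * G a b ω := fun ω => by
    simp only [F, G, dotProduct, sum_mul_sum]
    exact sum_congr rfl fun a _ => sum_congr rfl fun b _ => by ring
  have hint : ∀ a b, Integrable (fun ω => F a b ω * G a b ω) μ := fun a b =>
    (memLp_mulVec_mul_mulVec hY A B a b).integrable_mul (memLp_mulVec_mul_mulVec hZ A B a b)
  have hindep : ∀ a b, IndepFun (F a b) (G a b) μ := fun a b =>
    hYZ.comp (φ := fun v => (A *ᵥ v) a * (B *ᵥ v) b) (ψ := fun v => (A *ᵥ v) a * (B *ᵥ v) b)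
      (by fun_prop) (by fun_prop)
  simp_rw [hexpand]
  rw [integral_finsetSum _ fun a _ => integrable_finsetSum _ fun b _ => hint a b]
  simp_rw [integral_finsetSum _ fun b _ => hint _ b]
  have hterm : ∀ a b, ∫ ω, F a b ω * G a b ω ∂μ = c * d * ((A * Bᵀ) a b * (A * Bᵀ) a b) :=
    fun a b => by
      rw [(hindep a b).integral_fun_mul_eq_mul_integral
        (memLp_mulVec_mul_mulVec hY A B a b).aestronglyMeasurable
        (memLp_mulVec_mul_mulVec hZ A B a b).aestronglyMeasurable,
        integral_mulVec_mul_mulVec hY hYcov, integral_mulVec_mul_mulVec hZ hZcov]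
      ring
  simp_rw [hterm, ← mul_sum, ← sum_hadamard_eq, hadamard_apply]

end RandomVector

lemma trace_sub_mul_transpose_sub {m n : Type*} [Fintype m] [Fintype n] (A B : Matrix m n ℝ) :
    trace ((A - B) * (A - B)ᵀ) = trace (A * Aᵀ) - 2 * trace (Aᵀ * B) + trace (B * Bᵀ) := by
  have hAB : trace (A * Bᵀ) = trace (Aᵀ * B) := by
    rw [← trace_transpose, transpose_mul, transpose_transpose, trace_mul_comm]
  rw [transpose_sub, Matrix.sub_mul, Matrix.mul_sub, Matrix.mul_sub, trace_sub, trace_sub,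
    trace_sub, hAB, trace_mul_comm B Aᵀ]
  ring

lemma sum_Icc_sum_Ico_const (n : ℕ) (c : ℝ) :
    ∑ j ∈ Icc 1 n, ∑ _i ∈ Ico 1 j, c = n * (n - 1) / 2 * c := by
  induction n with
  | zero => simp
  | succ n ih =>
    rw [sum_Icc_succ_top (by omega), ih]
    simp only [sum_const, Nat.card_Ico, add_tsub_cancel_right, nsmul_eq_mul, Nat.cast_add,
      Nat.cast_one]
    ring

def centeringCoeff (i m l : ℕ) : ℝ := (if l = i then 1 else 0) - (m : ℝ)⁻¹

section Centering

variable {S : Finset ℕ} {i m : ℕ}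

lemma sum_centeringCoeff_smul {E : Type*} [AddCommGroup E] [Module ℝ E] (hi : i ∈ S)
    (v : ℕ → E) : ∑ l ∈ S, centeringCoeff i m l • v l = v i - (m : ℝ)⁻¹ • ∑ l ∈ S, v l := by
  simp [centeringCoeff, sub_smul, sum_sub_distrib, ite_smul, smul_sum, hi]

lemma sum_centeringCoeff (hi : i ∈ S) (hS : #S = m) : ∑ l ∈ S, centeringCoeff i m l = 0 := by
  have hm : (m : ℝ) ≠ 0 := by
    rw [← hS]; exact_mod_cast (card_pos.2 ⟨i, hi⟩).ne'
  simpa [hS, hm] using sum_centeringCoeff_smul (m := m) hi (fun _ => (1 : ℝ))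

lemma sum_centeringCoeff_sq (hi : i ∈ S) (hS : #S = m) :
    ∑ l ∈ S, centeringCoeff i m l ^ 2 = 1 - (m : ℝ)⁻¹ := by
  simp only [sq, ← smul_eq_mul (centeringCoeff i m _), sum_centeringCoeff_smul hi,
    sum_centeringCoeff hi hS, smul_zero, sub_zero]
  simp [centeringCoeff]

lemma mulVec_add_sub_average {κ ι : Type*} [Fintype κ] (Γ : Matrix ι κ ℝ) (μ₀ : ι → ℝ)
    (v : ℕ → κ → ℝ) (hi : i ∈ S) (hS : #S = m) :
    Γ *ᵥ v i + μ₀ - (m : ℝ)⁻¹ • ∑ l ∈ S, (Γ *ᵥ v l + μ₀)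
      = Γ *ᵥ ∑ l ∈ S, centeringCoeff i m l • v l := by
  rw [← sum_centeringCoeff_smul hi (fun l => Γ *ᵥ v l + μ₀), mulVec_sum]
  simp_rw [mulVec_smul, smul_add]
  rw [sum_add_distrib, ← sum_smul, sum_centeringCoeff hi hS, zero_smul, add_zero]

end Centering

namespace ECDMModel

variable {Ω : Type} [MeasurableSpace Ω] (M : ECDMModel Ω)

instance isProbabilityMeasure_P : IsProbabilityMeasure M.P := M.isProb

lemma memLp_w (j : ℕ) (r : Fin M.q) : MemLp (fun ω => M.w j ω r) 4 M.P := by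
  have hm : AEStronglyMeasurable (fun ω => M.w j ω r) M.P :=
    ((measurable_pi_apply r).comp (M.w_meas j)).aestronglyMeasurable
  refine (integrable_norm_rpow_iff hm (by norm_num) (by norm_num)).1 ?_
  have h4 : Even 4 := by decide
  simpa [Real.norm_eq_abs, h4.pow_abs] using M.w_mom4 j r

lemma integral_w_mul_w (l m : ℕ) (r s : Fin M.q) :
    ∫ ω, M.w l ω r * M.w m ω s ∂M.P = if l = m ∧ r = s then 1 else 0 := by
  by_cases hlm : l = m
  · subst hlm
    simp [M.w_cov]
  · have hindep : IndepFun (fun ω => M.w l ω r) (fun ω => M.w m ω s) M.P :=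
      (M.w_indep.indepFun hlm).comp (measurable_pi_apply r) (measurable_pi_apply s)
    rw [hindep.integral_fun_mul_eq_mul_integral (M.memLp_w l r).aestronglyMeasurable
      (M.memLp_w m s).aestronglyMeasurable, M.w_mean, zero_mul, if_neg fun h => hlm h.1]

lemma memLp_sum_smul_w (S : Finset ℕ) (c : ℕ → ℝ) (r : Fin M.q) :
    MemLp (fun ω => (∑ l ∈ S, c l • M.w l ω) r) 4 M.P := by
  simp only [Finset.sum_apply, Pi.smul_apply, smul_eq_mul]
  exact memLp_finsetSum _ fun l _ => (M.memLp_w l r).const_mul (c l)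

lemma integral_sum_smul_w_mul (S : Finset ℕ) (c : ℕ → ℝ) (r s : Fin M.q) :
    ∫ ω, (∑ l ∈ S, c l • M.w l ω) r * (∑ l ∈ S, c l • M.w l ω) s ∂M.P
      = if r = s then ∑ l ∈ S, c l ^ 2 else 0 := by
  have hint : ∀ l m, Integrable (fun ω => c l * c m * (M.w l ω r * M.w m ω s)) M.P :=
    fun l m => ((memLp_two_mul_of_memLp_four (M.memLp_w l r) (M.memLp_w m s)).integrable
      one_le_two).const_mul _
  simp only [Finset.sum_apply, Pi.smul_apply, smul_eq_mul, sum_mul_sum, mul_mul_mul_comm (c _)]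
  rw [integral_finsetSum _ fun l _ => integrable_finsetSum _ fun m _ => hint l m]
  simp_rw [integral_finsetSum _ fun m _ => hint _ m, integral_const_mul, integral_w_mul_w]
  split_ifs with hrs <;> simp [hrs, sq]

lemma indepFun_sum_smul_w {S T : Finset ℕ} (hST : Disjoint S T) (c d : ℕ → ℝ) :
    IndepFun (fun ω => ∑ l ∈ S, c l • M.w l ω) (fun ω => ∑ l ∈ T, d l • M.w l ω) M.P := by
  have h := (M.w_indep.indepFun_finset S T hST M.w_meas).comp
    (φ := fun x => ∑ l : S, c l • x l) (ψ := fun x => ∑ l : T, d l • x l)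
    (by fun_prop) (by fun_prop)
  convert h using 1 <;> funext ω <;> exact (sum_coe_sort _ _).symm

lemma n1_ge_two : 2 ≤ M.n1 := by
  have := M.hn; unfold n1; omega

lemma n2_ge_two : 2 ≤ M.n2 := by
  have := M.hn; unfold n2 n1; omega

lemma mem_Vset_one {i j : ℕ} (hi : 1 ≤ i) (hij : i < j) (hj : j ≤ M.n) :
    i ∈ M.Vset 1 (i + j) := by
  have hn1 : M.n1 = (M.n + 1) / 2 := rfl
  have hn2 : M.n2 = M.n - M.n1 := rfl
  rw [Vset, if_pos rfl, V1]
  split_ifs <;> simp only [mem_union, mem_Icc] <;> omega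

lemma mem_Vset_two {i j : ℕ} (hi : 1 ≤ i) (hij : i < j) (hj : j ≤ M.n) :
    j ∈ M.Vset 2 (i + j) := by
  have hn1 : M.n1 = (M.n + 1) / 2 := rfl
  have hn2 : M.n2 = M.n - M.n1 := rfl
  rw [Vset, if_neg (by decide), V2]
  split_ifs <;> simp only [mem_union, mem_Icc] <;> omega

lemma card_Vset_one (k : ℕ) : #(M.Vset 1 k) = M.nsub 1 := by
  have hn1 : M.n1 = (M.n + 1) / 2 := rfl
  have hn2 : M.n2 = M.n - M.n1 := rfl
  rw [Vset, if_pos rfl, nsub, if_pos rfl, V1]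
  split_ifs
  · simp only [Nat.card_Icc]; omega
  · rw [card_union_of_disjoint (disjoint_left.2 fun a ha hb => by
      simp only [mem_Icc] at ha hb; omega), Nat.card_Icc, Nat.card_Icc]
    omega

lemma card_Vset_two {k : ℕ} (hk : k ≤ 2 * M.n) : #(M.Vset 2 k) = M.nsub 2 := by
  have hn1 : M.n1 = (M.n + 1) / 2 := rfl
  have hn2 : M.n2 = M.n - M.n1 := rfl
  rw [Vset, if_neg (by decide), nsub, if_neg (by decide), V2]
  split_ifs
  · simp only [Nat.card_Icc]; omega
  · rw [card_union_of_disjoint (disjoint_left.2 fun a ha hb => by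
      simp only [mem_Icc] at ha hb; omega), Nat.card_Icc, Nat.card_Icc]
    omega

lemma disjoint_Vset (k : ℕ) : Disjoint (M.Vset 1 k) (M.Vset 2 k) := by
  have hn1 : M.n1 = (M.n + 1) / 2 := rfl
  have hn2 : M.n2 = M.n - M.n1 := rfl
  rw [Vset, if_pos rfl, Vset, if_neg (by decide), V1, V2]
  refine disjoint_left.2 fun a ha hb => ?_
  split_ifs at ha hb <;> simp only [mem_union, mem_Icc] at ha hb <;> omega

/-- `w_i − w̄_{(s)(k)}`, the noise part of `x_i − x̄_{(s)(k)}`. -/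
def centeredNoise (s k i : ℕ) (ω : Ω) : Fin M.q → ℝ :=
  ∑ l ∈ M.Vset s k, centeringCoeff i (M.nsub s) l • M.w l ω

variable {s k i j : ℕ}

lemma x1_sub_xbar1 (hi : i ∈ M.Vset s k) (hcard : #(M.Vset s k) = M.nsub s) (ω : Ω)
    (a : Fin M.p₁) : M.x1 i ω a - M.xbar1 s k ω a = (M.Γ₁ *ᵥ M.centeredNoise s k i ω) a := by
  rw [centeredNoise, ← mulVec_add_sub_average M.Γ₁ M.μ₁ (M.w · ω) hi hcard]
  simp [x1, xbar1, div_eq_inv_mul, Finset.sum_apply]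

lemma x2_sub_xbar2 (hi : i ∈ M.Vset s k) (hcard : #(M.Vset s k) = M.nsub s) (ω : Ω)
    (b : Fin M.p₂) : M.x2 i ω b - M.xbar2 s k ω b = (M.Γ₂ *ᵥ M.centeredNoise s k i ω) b := by
  rw [centeredNoise, ← mulVec_add_sub_average M.Γ₂ M.μ₂ (M.w · ω) hi hcard]
  simp [x2, xbar2, div_eq_inv_mul, Finset.sum_apply]

lemma memLp_centeredNoise (s k i : ℕ) (r : Fin M.q) :
    MemLp (fun ω => M.centeredNoise s k i ω r) 4 M.P :=
  M.memLp_sum_smul_w _ _ r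

lemma integral_centeredNoise_mul (hi : i ∈ M.Vset s k) (hcard : #(M.Vset s k) = M.nsub s)
    (r t : Fin M.q) :
    ∫ ω, M.centeredNoise s k i ω r * M.centeredNoise s k i ω t ∂M.P
      = if r = t then 1 - (M.nsub s : ℝ)⁻¹ else 0 := by
  rw [← sum_centeringCoeff_sq hi hcard]
  exact M.integral_sum_smul_w_mul _ _ r t

def crossForm (S0 : Matrix (Fin M.p₁) (Fin M.p₂) ℝ) (s k i : ℕ) (ω : Ω) : ℝ :=
  ∑ a, ∑ b, (M.x1 i ω a - M.xbar1 s k ω a) * S0 a b * (M.x2 i ω b - M.xbar2 s k ω b)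

lemma crossForm_eq (S0 : Matrix (Fin M.p₁) (Fin M.p₂) ℝ) (hi : i ∈ M.Vset s k)
    (hcard : #(M.Vset s k) = M.nsub s) :
    M.crossForm S0 s k i = fun ω => ∑ a, ∑ b,
      (M.Γ₁ *ᵥ M.centeredNoise s k i ω) a * S0 a b * (M.Γ₂ *ᵥ M.centeredNoise s k i ω) b := by
  funext ω
  simp only [crossForm, M.x1_sub_xbar1 hi hcard, M.x2_sub_xbar2 hi hcard]

lemma integrable_crossForm (S0 : Matrix (Fin M.p₁) (Fin M.p₂) ℝ) (hi : i ∈ M.Vset s k)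
    (hcard : #(M.Vset s k) = M.nsub s) : Integrable (M.crossForm S0 s k i) M.P := by
  rw [M.crossForm_eq S0 hi hcard]
  exact integrable_sum_mulVec_mul_mulVec (M.memLp_centeredNoise s k i) _ _ _

lemma integral_crossForm (S0 : Matrix (Fin M.p₁) (Fin M.p₂) ℝ) (hi : i ∈ M.Vset s k)
    (hcard : #(M.Vset s k) = M.nsub s) :
    ∫ ω, M.crossForm S0 s k i ω ∂M.P = (1 - (M.nsub s : ℝ)⁻¹) * trace (M.Sigsᵀ * S0) := by
  rw [M.crossForm_eq S0 hi hcard]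
  exact integral_sum_mulVec_mul_mulVec (M.memLp_centeredNoise s k i)
    (M.integral_centeredNoise_mul hi hcard) _ _ _

lemma Dhat_eq (hi : 1 ≤ i) (hij : i < j) (hj : j ≤ M.n) :
    M.Dhat i j = fun ω =>
      (M.Γ₁ *ᵥ M.centeredNoise 1 (i + j) i ω ⬝ᵥ M.Γ₁ *ᵥ M.centeredNoise 2 (i + j) j ω) *
        (M.Γ₂ *ᵥ M.centeredNoise 1 (i + j) i ω ⬝ᵥ M.Γ₂ *ᵥ M.centeredNoise 2 (i + j) j ω) := by
  funext ω
  have hcard₂ := M.card_Vset_two (k := i + j) (by omega)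
  have hi₁ := M.mem_Vset_one hi hij hj
  have hj₂ := M.mem_Vset_two hi hij hj
  simp only [Dhat, M.x1_sub_xbar1 hi₁ (M.card_Vset_one _), M.x2_sub_xbar2 hi₁ (M.card_Vset_one _),
    M.x1_sub_xbar1 hj₂ hcard₂, M.x2_sub_xbar2 hj₂ hcard₂]
  rfl

lemma integrable_Dhat (hi : 1 ≤ i) (hij : i < j) (hj : j ≤ M.n) :
    Integrable (M.Dhat i j) M.P := by
  rw [M.Dhat_eq hi hij hj]
  exact integrable_dotProduct_mul_dotProduct (M.memLp_centeredNoise 1 _ i)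
    (M.memLp_centeredNoise 2 _ j) _ _

lemma integral_Dhat (hi : 1 ≤ i) (hij : i < j) (hj : j ≤ M.n) :
    ∫ ω, M.Dhat i j ω ∂M.P
      = (1 - (M.nsub 1 : ℝ)⁻¹) * (1 - (M.nsub 2 : ℝ)⁻¹) * trace (M.Sigs * M.Sigsᵀ) := by
  rw [M.Dhat_eq hi hij hj]
  exact integral_dotProduct_mul_dotProduct
    (M.indepFun_sum_smul_w (M.disjoint_Vset (i + j)) _ _)
    (M.memLp_centeredNoise 1 _ i) (M.memLp_centeredNoise 2 _ j)
    (M.integral_centeredNoise_mul (M.mem_Vset_one hi hij hj) (M.card_Vset_one _))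
    (M.integral_centeredNoise_mul (M.mem_Vset_two hi hij hj) (M.card_Vset_two (by omega))) _ _

variable (S0 : Matrix (Fin M.p₁) (Fin M.p₂) ℝ)

lemma integrable_Dhat0 (hi : 1 ≤ i) (hij : i < j) (hj : j ≤ M.n) :
    Integrable (M.Dhat0 S0 i j) M.P :=
  (((M.integrable_Dhat hi hij hj).const_mul _).sub
    ((M.integrable_crossForm S0 (M.mem_Vset_one hi hij hj) (M.card_Vset_one _)).const_mul _)).sub
    ((M.integrable_crossForm S0 (M.mem_Vset_two hi hij hj)
      (M.card_Vset_two (by omega))).const_mul _)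

lemma integral_Dhat0 (hi : 1 ≤ i) (hij : i < j) (hj : j ≤ M.n) :
    ∫ ω, M.Dhat0 S0 i j ω ∂M.P = trace (M.Sigs * M.Sigsᵀ) - 2 * trace (M.Sigsᵀ * S0) := by
  have hi₁ := M.mem_Vset_one hi hij hj
  have hj₂ := M.mem_Vset_two hi hij hj
  have hcard₁ := M.card_Vset_one (i + j)
  have hcard₂ := M.card_Vset_two (k := i + j) (by omega)
  have hD := (M.integrable_Dhat hi hij hj).const_mul M.u
  have hC₁ := (M.integrable_crossForm S0 hi₁ hcard₁).const_mul ((M.n1 : ℝ) / (M.n1 - 1))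
  have hC₂ := (M.integrable_crossForm S0 hj₂ hcard₂).const_mul ((M.n2 : ℝ) / (M.n2 - 1))
  have hDC : Integrable (fun ω => M.u * M.Dhat i j ω
      - M.n1 / (M.n1 - 1) * M.crossForm S0 1 (i + j) i ω) M.P := hD.sub hC₁
  change ∫ ω, M.u * M.Dhat i j ω - M.n1 / (M.n1 - 1) * M.crossForm S0 1 (i + j) i ω
    - M.n2 / (M.n2 - 1) * M.crossForm S0 2 (i + j) j ω ∂M.P = _
  rw [integral_sub hDC hC₂, integral_sub hD hC₁, integral_const_mul, integral_const_mul,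
    integral_const_mul, M.integral_Dhat hi hij hj, M.integral_crossForm S0 hi₁ hcard₁,
    M.integral_crossForm S0 hj₂ hcard₂]
  have h₁ : (2 : ℝ) ≤ M.n1 := by exact_mod_cast M.n1_ge_two
  have h₂ : (2 : ℝ) ≤ M.n2 := by exact_mod_cast M.n2_ge_two
  have : (M.n1 : ℝ) ≠ 0 := by positivity
  have : (M.n2 : ℝ) ≠ 0 := by positivity
  have : (M.n1 : ℝ) - 1 ≠ 0 := by linarith
  have : (M.n2 : ℝ) - 1 ≠ 0 := by linarith
  have hnsub₁ : M.nsub 1 = M.n1 := if_pos rfl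
  have hnsub₂ : M.nsub 2 = M.n2 := if_neg (by decide)
  rw [hnsub₁, hnsub₂, u]
  field_simp
  ring

lemma integral_That0 :
    ∫ ω, M.That0 S0 ω ∂M.P
      = trace (M.Sigs * M.Sigsᵀ) - 2 * trace (M.Sigsᵀ * S0) + trace (S0 * S0ᵀ) := by
  have hint : ∀ j ∈ Icc 1 M.n, ∀ i ∈ Ico 1 j, Integrable (M.Dhat0 S0 i j) M.P :=
    fun j hj i hi => by
      simp only [mem_Icc, mem_Ico] at hj hi
      exact M.integrable_Dhat0 S0 hi.1 hi.2 hj.2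
  have hsum : ∫ ω, ∑ j ∈ Icc 1 M.n, ∑ i ∈ Ico 1 j, M.Dhat0 S0 i j ω ∂M.P
      = M.n * (M.n - 1) / 2 * (trace (M.Sigs * M.Sigsᵀ) - 2 * trace (M.Sigsᵀ * S0)) := by
    rw [integral_finsetSum _ fun j hj => integrable_finsetSum _ (hint j hj),
      ← sum_Icc_sum_Ico_const]
    refine sum_congr rfl fun j hj => ?_
    rw [integral_finsetSum _ (hint j hj)]
    refine sum_congr rfl fun i hi => ?_
    simp only [mem_Icc, mem_Ico] at hj hi
    exact M.integral_Dhat0 S0 hi.1 hi.2 hj.2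
  have hn : (4 : ℝ) ≤ M.n := by exact_mod_cast M.hn
  have : (M.n : ℝ) ≠ 0 := by positivity
  have : (M.n : ℝ) - 1 ≠ 0 := by linarith
  unfold That0
  rw [integral_add ((integrable_finsetSum _ fun j hj =>
      integrable_finsetSum _ (hint j hj)).const_mul _) (integrable_const _),
    integral_const_mul, hsum, integral_const, probReal_univ, one_smul]
  field_simp

end ECDMModel

/-- for every candidate `p₁×p₂` matrix `Σ₀` and all `1 ≤ i < j ≤ n`,
`E(Δ̂_{ij,0}) = ‖Σ*‖_F² − 2 tr(Σ*ᵀΣ₀) = Δ₀ − ‖Σ₀‖_F²` where `Δ₀ = ‖Σ* − Σ₀‖_F²`;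
consequently `E(T̂_{n,0}) = Δ₀`. -/
theorem ecdm_That0_unbiased {Ω : Type} [MeasurableSpace Ω] (M : ECDMModel Ω)
    (S0 : Matrix (Fin M.p₁) (Fin M.p₂) ℝ) :
    (∀ i j : ℕ, 1 ≤ i → i < j → j ≤ M.n →
      ∫ ω, M.Dhat0 S0 i j ω ∂M.P =
        Matrix.trace (M.Sigs * M.Sigsᵀ) - 2 * Matrix.trace (M.Sigsᵀ * S0) ∧
      ∫ ω, M.Dhat0 S0 i j ω ∂M.P = M.Delta0 S0 - Matrix.trace (S0 * S0ᵀ)) ∧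
    ∫ ω, M.That0 S0 ω ∂M.P = M.Delta0 S0 := by
  have hΔ₀ : trace (M.Sigs * M.Sigsᵀ) - 2 * trace (M.Sigsᵀ * S0)
      = M.Delta0 S0 - trace (S0 * S0ᵀ) := by
    rw [ECDMModel.Delta0, trace_sub_mul_transpose_sub]
    ring
  refine ⟨fun i j hi hij hj => ⟨M.integral_Dhat0 S0 hi hij hj,
    (M.integral_Dhat0 S0 hi hij hj).trans hΔ₀⟩, ?_⟩
  rw [M.integral_That0, hΔ₀, sub_add_cancel]
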